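/- arXiv:2305.18000 — 6 statements merged into one kernel-verified Lean document; each statement's English description precedes it below -/
import Mathlib

section
/- Let W be the transition rate matrix of a continuous-time Markov jump process on a finite state space in a steady state π with spectral gap g. Then for every τ ≥ 0 and all observables a, b ∈ ℝ^N, |δC_{ba}^τ| ≤ τ e^{−gτ} ‖a‖_* ‖b‖_* Σ_{m,n} |j_{mn}|, where j_{mn} are the steady-state probability currents. -/
/-!
Since `W` is real, each `v n` is itself a left eigenvector of `W`, with eigenvalue
`μ n = conj (λ n)`. Expanding `a` and `b` in the `v n` turns the asymmetry into
`δC = ∑ m n, b̃ m ã n (e^{τ μ m} - e^{τ μ n}) ⟨v m, Π v n⟩`.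
Terms involving the stationary mode vanish: `v n₀` is constant and every other `v m` is orthogonal
to `π`. For the remaining terms, the mean value theorem on the half-plane `Re z ≤ -g` bounds the
exponential difference by `τ e^{-gτ} |μ m - μ n|`, and `(μ m - μ n) ⟨v m, Π v n⟩ = ⟨v m, J v n⟩`
for the current matrix `J = WΠ - (WΠ)ᵀ`, which is at most `∑ |j_{mn}|` since the entries of the
normalized `v k` have modulus at most one.
-/

open Matrix
open scoped Matrix.Norms.Operator

section LeftEigenvectors

variable {R ι κ : Type*} [CommRing R] [Fintype ι] [Fintype κ]

def currentMatrix [DecidableEq ι] (W : Matrix ι ι R) (π : ι → R) : Matrix ι ι R :=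
  W * diagonal π - (W * diagonal π)ᵀ

theorem currentMatrix_apply [DecidableEq ι] (W : Matrix ι ι R) (π : ι → R) (m n : ι) :
    currentMatrix W π m n = W m n * π n - W n m * π m := by
  simp [currentMatrix, mul_comm]

theorem Matrix.dotProduct_diagonal_mulVec_comm [DecidableEq ι] (q x y : ι → R) :
    x ⬝ᵥ diagonal q *ᵥ y = y ⬝ᵥ diagonal q *ᵥ x := by
  simp only [dotProduct, mulVec_diagonal]
  exact Finset.sum_congr rfl fun i _ => by ring

theorem Matrix.sum_smul_dotProduct_mul_diagonal_mulVec [DecidableEq ι] {E : Matrix ι ι R}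
    {v : κ → ι → R} {e : κ → R} (hE : ∀ k, v k ᵥ* E = e k • v k) (q : ι → R) (c d : κ → R) :
    (∑ m, c m • v m) ⬝ᵥ (E * diagonal q) *ᵥ ∑ n, d n • v n =
      ∑ m, ∑ n, c m * d n * (e m * (v m ⬝ᵥ diagonal q *ᵥ v n)) := by
  rw [← mulVec_mulVec, dotProduct_mulVec, sum_vecMul, sum_dotProduct]
  refine Finset.sum_congr rfl fun m _ => ?_
  rw [smul_vecMul, hE, smul_smul, smul_dotProduct, mulVec_sum, dotProduct_sum, smul_eq_mul,
    Finset.mul_sum]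
  refine Finset.sum_congr rfl fun n _ => ?_
  rw [mulVec_smul, dotProduct_smul, smul_eq_mul]
  ring

theorem Matrix.sum_smul_dotProduct_mul_diagonal_mulVec_sub [DecidableEq ι] {E : Matrix ι ι R}
    {v : κ → ι → R} {e : κ → R} (hE : ∀ k, v k ᵥ* E = e k • v k) (q : ι → R) (c d : κ → R) :
    (∑ m, c m • v m) ⬝ᵥ (E * diagonal q) *ᵥ (∑ n, d n • v n) -
        (∑ n, d n • v n) ⬝ᵥ (E * diagonal q) *ᵥ ∑ m, c m • v m =
      ∑ m, ∑ n, c m * d n * ((e m - e n) * (v m ⬝ᵥ diagonal q *ᵥ v n)) := by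
  rw [sum_smul_dotProduct_mul_diagonal_mulVec hE, sum_smul_dotProduct_mul_diagonal_mulVec hE,
    Finset.sum_comm (f := fun m n => d m * c n * (e m * (v m ⬝ᵥ diagonal q *ᵥ v n))),
    ← Finset.sum_sub_distrib]
  refine Finset.sum_congr rfl fun m _ => ?_
  rw [← Finset.sum_sub_distrib]
  refine Finset.sum_congr rfl fun n _ => ?_
  rw [dotProduct_diagonal_mulVec_comm q (v n)]
  ring

theorem Matrix.sub_mul_dotProduct_diagonal_mulVec [DecidableEq ι] {A : Matrix ι ι R}
    {x y : ι → R} {μ ν : R} (hx : x ᵥ* A = μ • x) (hy : y ᵥ* A = ν • y) (q : ι → R) :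
    (μ - ν) * (x ⬝ᵥ diagonal q *ᵥ y) = x ⬝ᵥ currentMatrix A q *ᵥ y := by
  have hμ : x ⬝ᵥ (A * diagonal q) *ᵥ y = μ * (x ⬝ᵥ diagonal q *ᵥ y) := by
    rw [← mulVec_mulVec, dotProduct_mulVec, hx, smul_dotProduct, smul_eq_mul]
  have hν : x ⬝ᵥ (A * diagonal q)ᵀ *ᵥ y = ν * (x ⬝ᵥ diagonal q *ᵥ y) := by
    rw [transpose_mul, diagonal_transpose, ← mulVec_mulVec, mulVec_transpose, hy, mulVec_smul,
      dotProduct_smul, smul_eq_mul]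
  rw [currentMatrix, sub_mulVec, dotProduct_sub, hμ, hν, sub_mul]

theorem Matrix.dotProduct_diagonal_mulVec_const_eq_zero [DecidableEq ι] [NoZeroDivisors R]
    {A : Matrix ι ι R} {x q : ι → R} {μ : R} (hx : x ᵥ* A = μ • x) (hμ : μ ≠ 0)
    (hq : A *ᵥ q = 0) (c : R) : x ⬝ᵥ diagonal q *ᵥ (fun _ => c) = 0 := by
  have horth : μ * (x ⬝ᵥ q) = 0 := by
    rw [← smul_eq_mul, ← smul_dotProduct, ← hx, ← dotProduct_mulVec, hq, dotProduct_zero]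
  have hconst : diagonal q *ᵥ (fun _ => c) = c • q := by ext; simp [mulVec_diagonal, mul_comm]
  rw [hconst, dotProduct_smul, (mul_eq_zero.mp horth).resolve_left hμ, smul_zero]

end LeftEigenvectors

section Complex

variable {ι : Type*} [Fintype ι]

theorem Matrix.vecMul_exp_of_vecMul_eq_smul {𝕂 : Type*} [RCLike 𝕂] [DecidableEq ι]
    {A : Matrix ι ι 𝕂} {x : ι → 𝕂} {μ : 𝕂} (h : x ᵥ* A = μ • x) :
    x ᵥ* NormedSpace.exp A = NormedSpace.exp μ • x := by
  have hpow : ∀ n : ℕ, x ᵥ* A ^ n = μ ^ n • x := fun n => by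
    induction n with
    | zero => simp
    | succ n ih => rw [pow_succ, ← vecMul_vecMul, ih, smul_vecMul, h, smul_smul, pow_succ]
  let L : Matrix ι ι 𝕂 →+ (ι → 𝕂) := AddMonoidHom.mk' (x ᵥ* ·) fun M N => vecMul_add M N x
  refine ((NormedSpace.exp_series_hasSum_exp' (𝕂 := 𝕂) A).map L
    (continuous_const.matrix_vecMul continuous_id)).unique ?_
  convert (NormedSpace.exp_series_hasSum_exp' (𝕂 := 𝕂) μ).smul_const x using 2 with n
  simp [L, vecMul_smul, hpow, smul_smul]

theorem Matrix.exp_map_ofReal [DecidableEq ι] (A : Matrix ι ι ℝ) :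
    NormedSpace.exp (A.map Complex.ofReal) = (NormedSpace.exp A).map Complex.ofReal :=
  (NormedSpace.map_exp Complex.ofRealHom.mapMatrix
    (continuous_id.matrix_map Complex.continuous_ofReal) A).symm

theorem Matrix.vecMul_map_ofReal_eq_smul {A : Matrix ι ι ℝ} {x : ι → ℂ} {μ : ℂ}
    (h : star x ᵥ* A.map Complex.ofReal = μ • star x) :
    x ᵥ* A.map Complex.ofReal = star μ • x := by
  have hreal : (A.map Complex.ofReal)ᴴ = (A.map Complex.ofReal)ᵀ := by ext; simp
  simpa [star_vecMul, hreal, mulVec_transpose] using congrArg star h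

theorem Complex.ofReal_dotProduct_mulVec {κ : Type*} [Fintype κ] (x : ι → ℝ)
    (M : Matrix ι κ ℝ) (y : κ → ℝ) :
    ((x ⬝ᵥ M *ᵥ y : ℝ) : ℂ) = (fun i => (x i : ℂ)) ⬝ᵥ M.map ofReal *ᵥ fun j => (y j : ℂ) := by
  rw [← ofRealHom_eq_coe, ofRealHom.map_dotProduct]
  congr 1
  exact funext (ofRealHom.map_mulVec M y)

theorem Complex.norm_le_one_of_sum_normSq_eq_one {x : ι → ℂ} (hx : ∑ i, normSq (x i) = 1)
    (i : ι) : ‖x i‖ ≤ 1 := by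
  have : normSq (x i) ≤ 1 := hx ▸ Finset.single_le_sum (fun j _ => normSq_nonneg (x j))
    (Finset.mem_univ i)
  rwa [normSq_eq_norm_sq, sq_le_one_iff₀ (norm_nonneg _)] at this

theorem Complex.norm_exp_ofReal_mul_sub_exp_ofReal_mul_le {g τ : ℝ} (hτ : 0 ≤ τ) {z w : ℂ}
    (hz : z.re ≤ -g) (hw : w.re ≤ -g) :
    ‖exp (τ * z) - exp (τ * w)‖ ≤ τ * Real.exp (-(g * τ)) * ‖z - w‖ := by
  refine (convex_halfSpace_re_le (-g)).norm_image_sub_le_of_norm_hasDerivWithin_le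
    (f := fun z => exp (τ * z)) (f' := fun u => exp (τ * u) * τ) (fun u _ => ?_)
    (fun u hu => ?_) hw hz
  · simpa using (((hasDerivAt_id u).const_mul (τ : ℂ)).cexp).hasDerivWithinAt
  · have : τ * u.re ≤ -(g * τ) := by nlinarith [show u.re ≤ -g from hu]
    simp only [norm_mul, norm_exp, norm_real, Real.norm_of_nonneg hτ, re_ofReal_mul]
    rw [mul_comm]
    gcongr

end Complex

theorem Matrix.norm_dotProduct_mulVec_le {𝕜 m n : Type*} [Fintype m] [Fintype n]
    [SeminormedRing 𝕜] (M : Matrix m n 𝕜) {x : m → 𝕜} {y : n → 𝕜} (hx : ∀ i, ‖x i‖ ≤ 1)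
    (hy : ∀ j, ‖y j‖ ≤ 1) : ‖x ⬝ᵥ M *ᵥ y‖ ≤ ∑ i, ∑ j, ‖M i j‖ := by
  simp only [dotProduct, mulVec, Finset.mul_sum]
  refine (norm_sum_le _ _).trans <| Finset.sum_le_sum fun i _ => ?_
  refine (norm_sum_le _ _).trans <| Finset.sum_le_sum fun j _ => ?_
  calc ‖x i * (M i j * y j)‖ ≤ ‖x i‖ * (‖M i j‖ * ‖y j‖) :=
        (norm_mul_le _ _).trans (by gcongr; exact norm_mul_le _ _)
    _ ≤ 1 * (‖M i j‖ * 1) := by gcongr <;> simp [hx, hy]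
    _ = ‖M i j‖ := by ring

theorem norm_sum_sum_mul_le_of_eq_zero {𝕜 ι : Type*} [SeminormedRing 𝕜] [Fintype ι]
    [DecidableEq ι] {F : ι → ι → 𝕜} {i₀ : ι} {K : ℝ} (hrow : ∀ n, F i₀ n = 0)
    (hcol : ∀ m, F m i₀ = 0) (hF : ∀ m ≠ i₀, ∀ n ≠ i₀, ‖F m n‖ ≤ K) (c d : ι → 𝕜) :
    ‖∑ m, ∑ n, c m * d n * F m n‖ ≤
      K * (∑ m ∈ Finset.univ.erase i₀, ‖c m‖) * ∑ n ∈ Finset.univ.erase i₀, ‖d n‖ := by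
  rw [← Finset.sum_erase _ (f := fun m => ∑ n, c m * d n * F m n)
    (Finset.sum_eq_zero fun n _ => by rw [hrow, mul_zero])]
  calc ‖∑ m ∈ Finset.univ.erase i₀, ∑ n, c m * d n * F m n‖
      ≤ ∑ m ∈ Finset.univ.erase i₀, ∑ n ∈ Finset.univ.erase i₀, ‖c m‖ * ‖d n‖ * K := by
        refine (norm_sum_le _ _).trans <| Finset.sum_le_sum fun m hm => ?_
        rw [← Finset.sum_erase _ (f := fun n => c m * d n * F m n) (by rw [hcol, mul_zero])]
        refine (norm_sum_le _ _).trans <| Finset.sum_le_sum fun n hn => ?_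
        refine (norm_mul_le _ _).trans ?_
        gcongr
        · exact norm_mul_le _ _
        · exact hF m (Finset.ne_of_mem_erase hm) n (Finset.ne_of_mem_erase hn)
    _ = K * (∑ m ∈ Finset.univ.erase i₀, ‖c m‖) * ∑ n ∈ Finset.univ.erase i₀, ‖d n‖ := by
        rw [mul_assoc, Finset.sum_mul_sum, Finset.mul_sum]
        refine Finset.sum_congr rfl fun m _ => ?_
        rw [Finset.mul_sum]
        exact Finset.sum_congr rfl fun n _ => by ring

theorem norm_exp_sub_mul_dotProduct_diagonal_mulVec_le {ι : Type*} [Fintype ι] [DecidableEq ι]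
    {W : Matrix ι ι ℝ} {π : ι → ℝ} {x y : ι → ℂ} {μ ν : ℂ} {g τ : ℝ} (hτ : 0 ≤ τ)
    (hx : x ᵥ* W.map Complex.ofReal = μ • x) (hy : y ᵥ* W.map Complex.ofReal = ν • y)
    (hμ : μ.re ≤ -g) (hν : ν.re ≤ -g) (hx₁ : ∀ i, ‖x i‖ ≤ 1) (hy₁ : ∀ j, ‖y j‖ ≤ 1) :
    ‖(Complex.exp (τ * μ) - Complex.exp (τ * ν)) * (x ⬝ᵥ diagonal (fun i => (π i : ℂ)) *ᵥ y)‖ ≤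
      τ * Real.exp (-(g * τ)) * ∑ m, ∑ n, |W m n * π n - W n m * π m| := by
  have hcurrent : ‖x ⬝ᵥ currentMatrix (W.map Complex.ofReal) (fun i => (π i : ℂ)) *ᵥ y‖ ≤
      ∑ m, ∑ n, |W m n * π n - W n m * π m| := by
    refine (norm_dotProduct_mulVec_le _ hx₁ hy₁).trans_eq ?_
    simp only [currentMatrix_apply, map_apply]
    norm_cast
  calc _ = ‖Complex.exp (τ * μ) - Complex.exp (τ * ν)‖ *
        ‖x ⬝ᵥ diagonal (fun i => (π i : ℂ)) *ᵥ y‖ := norm_mul _ _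
    _ ≤ τ * Real.exp (-(g * τ)) * ‖μ - ν‖ * ‖x ⬝ᵥ diagonal (fun i => (π i : ℂ)) *ᵥ y‖ := by
        gcongr
        exact Complex.norm_exp_ofReal_mul_sub_exp_ofReal_mul_le hτ hμ hν
    _ = τ * Real.exp (-(g * τ)) *
          ‖x ⬝ᵥ currentMatrix (W.map Complex.ofReal) (fun i => (π i : ℂ)) *ᵥ y‖ := by
        rw [← sub_mul_dotProduct_diagonal_mulVec hx hy, norm_mul, mul_assoc]
    _ ≤ _ := by gcongr

theorem ofReal_correlation_asymmetry_eq_sum {ι κ : Type*} [Fintype ι] [DecidableEq ι]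
    [Fintype κ] {W : Matrix ι ι ℝ} {v : κ → ι → ℂ} {μ : κ → ℂ}
    (hv : ∀ k, v k ᵥ* W.map Complex.ofReal = μ k • v k) (π : ι → ℝ) (τ : ℝ) {a b : ι → ℝ}
    {ta tb : κ → ℂ} (hta : (fun i => (a i : ℂ)) = ∑ n, ta n • v n)
    (htb : (fun i => (b i : ℂ)) = ∑ n, tb n • v n) :
    ((b ⬝ᵥ (NormedSpace.exp (τ • W) * diagonal π) *ᵥ a -
        a ⬝ᵥ (NormedSpace.exp (τ • W) * diagonal π) *ᵥ b : ℝ) : ℂ) =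
      ∑ m, ∑ n, tb m * ta n * ((Complex.exp (τ * μ m) - Complex.exp (τ * μ n)) *
        (v m ⬝ᵥ diagonal (fun i => (π i : ℂ)) *ᵥ v n)) := by
  have hexp k : v k ᵥ* NormedSpace.exp ((τ • W).map Complex.ofReal) =
      Complex.exp (τ * μ k) • v k := by
    rw [Complex.exp_eq_exp_ℂ]
    refine vecMul_exp_of_vecMul_eq_smul ?_
    rw [show (τ • W).map Complex.ofReal = (τ : ℂ) • W.map Complex.ofReal by ext; simp,
      vecMul_smul, hv, smul_smul]
  have hmap : (NormedSpace.exp (τ • W) * diagonal π).map Complex.ofReal =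
      NormedSpace.exp ((τ • W).map Complex.ofReal) * diagonal (fun i => (π i : ℂ)) := by
    rw [exp_map_ofReal, ← diagonal_map Complex.ofReal_zero]
    exact Matrix.map_mul (f := Complex.ofRealHom)
  rw [Complex.ofReal_sub, Complex.ofReal_dotProduct_mulVec, Complex.ofReal_dotProduct_mulVec,
    hmap, hta, htb]
  exact sum_smul_dotProduct_mul_diagonal_mulVec_sub hexp _ tb ta

theorem asymmetry_le_current_bound_general
    (N : ℕ) (W : Matrix (Fin N) (Fin N) ℝ)
    (π : Fin N → ℝ)
    (hstat : W.mulVec π = 0)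
    -- spectral decomposition of `W` by left eigenvectors
    (g : ℝ) (hg : 0 < g)
    (lam : Fin N → ℂ) (v : Fin N → Fin N → ℂ) (n₀ : Fin N)
    (hv₀ : ∃ c : ℂ, v n₀ = fun _ => c)
    (hgap : ∀ n, n ≠ n₀ → (lam n).re ≤ -g)
    (heig : ∀ n, Matrix.vecMul (star (v n)) (W.map (Complex.ofReal)) = lam n • star (v n))
    (hnorm : ∀ n, ∑ i, Complex.normSq (v n i) = 1)
    -- observables and their expansions in the left-eigenvector basis
    (τ : ℝ) (hτ : 0 ≤ τ) (a b : Fin N → ℝ) (ta tb : Fin N → ℂ)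
    (hta : (fun i => (a i : ℂ)) = ∑ n, ta n • v n)
    (htb : (fun i => (b i : ℂ)) = ∑ n, tb n • v n) :
    |b ⬝ᵥ (NormedSpace.exp (τ • W) * Matrix.diagonal π).mulVec a -
        a ⬝ᵥ (NormedSpace.exp (τ • W) * Matrix.diagonal π).mulVec b| ≤
      τ * Real.exp (-(g * τ)) *
        (∑ n ∈ Finset.univ.erase n₀, ‖ta n‖) *
        (∑ n ∈ Finset.univ.erase n₀, ‖tb n‖) *
        (∑ m, ∑ n, |W m n * π n - W n m * π m|) := by
  set P := fun m n => v m ⬝ᵥ diagonal (fun i => (π i : ℂ)) *ᵥ v n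
  set e := fun n => Complex.exp (τ * star (lam n))
  have hleft n : v n ᵥ* W.map Complex.ofReal = star (lam n) • v n :=
    vecMul_map_ofReal_eq_smul (heig n)
  have hstat' : W.map Complex.ofReal *ᵥ (fun i => (π i : ℂ)) = 0 := by
    ext i
    exact (Complex.ofRealHom.map_mulVec W π i).symm.trans (by simp [hstat])
  have hP₀ m (hm : m ≠ n₀) : P m n₀ = 0 := by
    have hμ : star (lam m) ≠ 0 := fun h => by
      have := hgap m hm
      simp [star_eq_zero.mp h] at this
      linarith
    obtain ⟨c, hc⟩ := hv₀
    simp only [P, hc]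
    exact dotProduct_diagonal_mulVec_const_eq_zero (hleft m) hμ hstat' c
  have hrow n : (e n₀ - e n) * P n₀ n = 0 := by
    rcases eq_or_ne n n₀ with rfl | hn
    · rw [sub_self, zero_mul]
    · rw [show P n₀ n = P n n₀ from dotProduct_diagonal_mulVec_comm _ _ _, hP₀ n hn, mul_zero]
  have hcol m : (e m - e n₀) * P m n₀ = 0 := by
    rcases eq_or_ne m n₀ with rfl | hm
    · rw [sub_self, zero_mul]
    · rw [hP₀ m hm, mul_zero]
  have hF m (hm : m ≠ n₀) n (hn : n ≠ n₀) :=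
    norm_exp_sub_mul_dotProduct_diagonal_mulVec_le (π := π) hτ (hleft m) (hleft n)
      (by simpa using hgap m hm) (by simpa using hgap n hn)
      (Complex.norm_le_one_of_sum_normSq_eq_one (hnorm m))
      (Complex.norm_le_one_of_sum_normSq_eq_one (hnorm n))
  rw [← Real.norm_eq_abs, ← Complex.norm_real,
    ofReal_correlation_asymmetry_eq_sum hleft π τ hta htb]
  exact (norm_sum_sum_mul_le_of_eq_zero (F := fun m n => (e m - e n) * P m n) hrow hcol hF
    tb ta).trans_eq (by ring)

/-- **Finite-time asymmetry of cross-correlations is bounded by the total current.**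
For a continuous-time Markov jump process with rate matrix `W`, steady state `π`, and spectral
gap `g`, `|δC_{ba}^τ| ≤ τ e^{−gτ} ‖a‖_* ‖b‖_* Σ_{m,n} |j_{mn}|` for all `τ ≥ 0`. -/
theorem asymmetry_le_current_bound
    (N : ℕ) (W : Matrix (Fin N) (Fin N) ℝ)
    (hW_off : ∀ m n : Fin N, m ≠ n → 0 ≤ W m n)
    (hW_diag : ∀ n : Fin N, W n n = -∑ m ∈ Finset.univ.erase n, W m n)
    (π : Fin N → ℝ) (hπ_pos : ∀ n, 0 < π n) (hπ_sum : ∑ n, π n = 1)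
    (hstat : W.mulVec π = 0)
    -- spectral decomposition of `W` by left eigenvectors
    (g : ℝ) (hg : 0 < g)
    (lam : Fin N → ℂ) (v : Fin N → Fin N → ℂ) (n₀ : Fin N)
    (hlam₀ : lam n₀ = 0)
    (hv₀ : ∃ c : ℂ, v n₀ = fun _ => c)
    (hgap : ∀ n, n ≠ n₀ → (lam n).re ≤ -g)
    (heig : ∀ n, Matrix.vecMul (star (v n)) (W.map (Complex.ofReal)) = lam n • star (v n))
    (hnorm : ∀ n, ∑ i, Complex.normSq (v n i) = 1)
    (hbasis : LinearIndependent ℂ v)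
    -- observables and their expansions in the left-eigenvector basis
    (τ : ℝ) (hτ : 0 ≤ τ) (a b : Fin N → ℝ) (ta tb : Fin N → ℂ)
    (hta : (fun i => (a i : ℂ)) = ∑ n, ta n • v n)
    (htb : (fun i => (b i : ℂ)) = ∑ n, tb n • v n) :
    |b ⬝ᵥ (NormedSpace.exp (τ • W) * Matrix.diagonal π).mulVec a -
        a ⬝ᵥ (NormedSpace.exp (τ • W) * Matrix.diagonal π).mulVec b| ≤
      τ * Real.exp (-(g * τ)) *
        (∑ n ∈ Finset.univ.erase n₀, ‖ta n‖) *
        (∑ n ∈ Finset.univ.erase n₀, ‖tb n‖) *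
        (∑ m, ∑ n, |W m n * π n - W n m * π m|) :=
  asymmetry_le_current_bound_general N W π hstat g hg lam v n₀ hv₀ hgap heig hnorm τ hτ a b ta tb
    hta htb
end

section
/- For a continuous-time Markov jump process with rate matrix W and steady state π, the asymmetry of cross-correlations has the integral representation δC_{ba}^τ = τ ∫₀¹ ⟨b| e^{sWτ} J e^{(1−s)Wᵀτ} |a⟩ ds for every τ ≥ 0 and all a, b ∈ ℝ^N, where J = WΠ − ΠWᵀ is the current matrix. -/
/-!
In a real Banach algebra the path `s ↦ exp (s • A) * P * exp ((1 - s) • B)` runs from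
`P * exp B` to `exp A * P` with derivative `exp (s • A) * (A * P - P * B) * exp ((1 - s) • B)`,
so the fundamental theorem of calculus gives
`exp A * P - P * exp B = ∫₀¹ exp (s • A) * (A * P - P * B) * exp ((1 - s) • B) ds`.
For `A = τ W`, `B = τ Wᵀ`, `P = Π` the integrand is `τ e^{sτW} J e^{(1-s)τWᵀ}`, and since `Π` is
symmetric, `⟨a| e^{τW} Π |b⟩ = ⟨b| Π e^{τWᵀ} |a⟩`, which turns `δC_{ba}^τ` into the left-hand side
paired with `⟨b|` and `|a⟩`.
-/

open Matrix NormedSpace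

section BanachAlgebra

variable {𝕂 𝔸 : Type*} [RCLike 𝕂] [NormedRing 𝔸] [NormedAlgebra 𝕂 𝔸] [CompleteSpace 𝔸]

theorem continuous_exp_smul_const (A : 𝔸) : Continuous fun u : 𝕂 => exp (u • A) :=
  continuous_iff_continuousAt.2 fun s => (hasDerivAt_exp_smul_const A s).continuousAt

theorem continuous_exp_smul_mul_mul_exp_one_sub_smul (A B C : 𝔸) :
    Continuous fun u : 𝕂 => exp (u • A) * C * exp ((1 - u) • B) :=
  ((continuous_exp_smul_const A).mul continuous_const).mul
    ((continuous_exp_smul_const B).comp (continuous_const.sub continuous_id))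

theorem hasDerivAt_exp_smul_mul_mul_exp_one_sub_smul (A B P : 𝔸) (s : 𝕂) :
    HasDerivAt (fun u : 𝕂 => exp (u • A) * P * exp ((1 - u) • B))
      (exp (s • A) * (A * P - P * B) * exp ((1 - s) • B)) s := by
  have hB : HasDerivAt (fun u : 𝕂 => exp ((1 - u) • B)) (-(B * exp ((1 - s) • B))) s := by
    have h := (hasDerivAt_exp_smul_const' B (1 - s)).scomp s ((hasDerivAt_id s).const_sub 1)
    rwa [neg_one_smul] at h
  exact (((hasDerivAt_exp_smul_const A s).mul_const P).mul hB).congr_deriv (by noncomm_ring)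

end BanachAlgebra

section RealBanachAlgebra

variable {𝔸 : Type*} [NormedRing 𝔸] [NormedAlgebra ℝ 𝔸] [CompleteSpace 𝔸]

theorem exp_mul_sub_mul_exp_eq_integral (A B P : 𝔸) :
    exp A * P - P * exp B =
      ∫ s in (0 : ℝ)..1, exp (s • A) * (A * P - P * B) * exp ((1 - s) • B) := by
  rw [intervalIntegral.integral_eq_sub_of_hasDerivAt
    (fun s _ => hasDerivAt_exp_smul_mul_mul_exp_one_sub_smul A B P s)
    ((continuous_exp_smul_mul_mul_exp_one_sub_smul A B _).intervalIntegrable 0 1)]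
  simp

theorem ContinuousLinearMap.map_exp_mul_sub_mul_exp_eq_integral {F : Type*}
    [NormedAddCommGroup F] [NormedSpace ℝ F] [CompleteSpace F] (L : 𝔸 →L[ℝ] F) (A B P : 𝔸) :
    L (exp A * P - P * exp B) =
      ∫ s in (0 : ℝ)..1, L (exp (s • A) * (A * P - P * B) * exp ((1 - s) • B)) := by
  rw [exp_mul_sub_mul_exp_eq_integral, L.intervalIntegral_comp_comm
    ((continuous_exp_smul_mul_mul_exp_one_sub_smul A B _).intervalIntegrable 0 1)]

end RealBanachAlgebra

theorem dotProduct_mulVec_transpose {n R : Type*} [Fintype n] [CommSemiring R]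
    (M : Matrix n n R) (a b : n → R) : a ⬝ᵥ M *ᵥ b = b ⬝ᵥ Mᵀ *ᵥ a := by
  rw [dotProduct_mulVec, dotProduct_comm, mulVec_transpose]

theorem asymmetry_eq_integral_current_general
    (N : ℕ) (W : Matrix (Fin N) (Fin N) ℝ)
    (π : Fin N → ℝ)
    (τ : ℝ) (a b : Fin N → ℝ) :
    b ⬝ᵥ (NormedSpace.exp (τ • W) * Matrix.diagonal π).mulVec a -
      a ⬝ᵥ (NormedSpace.exp (τ • W) * Matrix.diagonal π).mulVec b =
    τ * ∫ s in (0:ℝ)..1,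
        b ⬝ᵥ (NormedSpace.exp ((s * τ) • W) *
              (W * Matrix.diagonal π - Matrix.diagonal π * Wᵀ) *
              NormedSpace.exp (((1 - s) * τ) • Wᵀ)).mulVec a := by
  -- Any norm makes the matrices a Banach algebra; the statement does not mention it.
  let _ : NormedRing (Matrix (Fin N) (Fin N) ℝ) := Matrix.linftyOpNormedRing
  let _ : NormedAlgebra ℝ (Matrix (Fin N) (Fin N) ℝ) := Matrix.linftyOpNormedAlgebra
  set P := diagonal π
  set J := W * P - P * Wᵀ
  let L : Matrix (Fin N) (Fin N) ℝ →ₗ[ℝ] ℝ :=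
    { toFun := fun M => b ⬝ᵥ M *ᵥ a
      map_add' := fun M₁ M₂ => by simp only [add_mulVec, dotProduct_add]
      map_smul' := fun c M => by simp only [smul_mulVec, dotProduct_smul, RingHom.id_apply] }
  have hswap : a ⬝ᵥ (exp (τ • W) * P) *ᵥ b = b ⬝ᵥ (P * exp (τ • Wᵀ)) *ᵥ a := by
    rw [dotProduct_mulVec_transpose, transpose_mul, diagonal_transpose, ← exp_transpose,
      transpose_smul]
  have hcurrent : τ • W * P - P * τ • Wᵀ = τ • J := by
    simp only [J, smul_sub, Matrix.smul_mul, Matrix.mul_smul]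
  calc b ⬝ᵥ (exp (τ • W) * P) *ᵥ a - a ⬝ᵥ (exp (τ • W) * P) *ᵥ b
      = L.toContinuousLinearMap (exp (τ • W) * P - P * exp (τ • Wᵀ)) := by
        rw [hswap, ← dotProduct_sub, ← sub_mulVec]
        rfl
    _ = ∫ s in (0 : ℝ)..1,
          L.toContinuousLinearMap (exp (s • τ • W) * (τ • J) * exp ((1 - s) • τ • Wᵀ)) := by
        rw [← hcurrent]
        exact L.toContinuousLinearMap.map_exp_mul_sub_mul_exp_eq_integral _ _ _
    _ = _ := by
        rw [← intervalIntegral.integral_const_mul]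
        congr 1 with s
        rw [smul_smul, smul_smul, Matrix.mul_smul, Matrix.smul_mul, map_smul, smul_eq_mul]
        rfl

/-- **Integral representation of the asymmetry of cross-correlations.**
For a continuous-time Markov jump process with rate matrix `W` and steady state `π`,
`δC_{ba}^τ = τ ∫₀¹ ⟨b| e^{sWτ} J e^{(1−s)Wᵀτ} |a⟩ ds`, where `J = WΠ − ΠWᵀ`. -/
theorem asymmetry_eq_integral_current
    (N : ℕ) (W : Matrix (Fin N) (Fin N) ℝ)
    (hW_off : ∀ m n : Fin N, m ≠ n → 0 ≤ W m n)
    (hW_diag : ∀ n : Fin N, W n n = -∑ m ∈ Finset.univ.erase n, W m n)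
    (π : Fin N → ℝ) (hπ_pos : ∀ n, 0 < π n) (hπ_sum : ∑ n, π n = 1)
    (hstat : W.mulVec π = 0)
    (τ : ℝ) (hτ : 0 ≤ τ) (a b : Fin N → ℝ) :
    b ⬝ᵥ (NormedSpace.exp (τ • W) * Matrix.diagonal π).mulVec a -
      a ⬝ᵥ (NormedSpace.exp (τ • W) * Matrix.diagonal π).mulVec b =
    τ * ∫ s in (0:ℝ)..1,
        b ⬝ᵥ (NormedSpace.exp ((s * τ) • W) *
              (W * Matrix.diagonal π - Matrix.diagonal π * Wᵀ) *
              NormedSpace.exp (((1 - s) * τ) • Wᵀ)).mulVec a :=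
  asymmetry_eq_integral_current_general N W π τ a b
end

section
/- For a continuous-time Markov jump process in a steady state π, the dynamical state mobility is at most half the dynamical activity rate: κ ≤ γ/2. -/
/-!
Each summand of `κ` is the logarithmic mean `(a - b) / log (a / b)` of the two one-way fluxes
`a = w_{mn} π_n` and `b = w_{nm} π_m`, and each summand of `γ / 2` is their arithmetic mean.
The logarithmic mean is at most the arithmetic mean because `log (a / b) ≥ 2 (a - b) / (a + b)`
for `a > b > 0`, which is the first term of the series `log (1 + c⁻¹) = 2 ∑ (2c + 1)^{-(2k+1)} / (2k + 1)`
at `c = b / (a - b)`.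
-/

namespace Real

theorem two_mul_sub_div_add_le_log_div {a b : ℝ} (hb : 0 < b) (hba : b < a) :
    2 * (a - b) / (a + b) ≤ log (a / b) := by
  have hc : 0 < b / (a - b) := div_pos hb (sub_pos.mpr hba)
  have hfirst := le_hasSum (hasSum_log_one_add_inv hc) 0 fun k _ => by positivity
  have hlog : 1 + (b / (a - b))⁻¹ = a / b := by
    field_simp [(sub_pos.mpr hba).ne']
    ring
  have hterm : 2 * (1 / (2 * ((0 : ℕ) : ℝ) + 1)) * (1 / (2 * (b / (a - b)) + 1)) ^ (2 * 0 + 1)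
      = 2 * (a - b) / (a + b) := by
    field_simp [(sub_pos.mpr hba).ne']
    ring
  rwa [hlog, hterm] at hfirst

/-- With `log 0 = 0` and `x / 0 = 0` this is `0` when `a = b` or when one argument vanishes. -/
noncomputable def logMean (a b : ℝ) : ℝ := (a - b) / log (a / b)

theorem logMean_comm (a b : ℝ) : logMean a b = logMean b a := by
  rw [logMean, logMean, ← neg_sub b a, ← inv_div b a, log_inv, neg_div_neg_eq]

theorem logMean_le_add_div_two_of_lt {a b : ℝ} (hb : 0 ≤ b) (hba : b < a) :
    logMean a b ≤ (a + b) / 2 := by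
  rcases hb.eq_or_lt with rfl | hb
  · rw [logMean, div_zero, log_zero, div_zero]
    linarith
  have hlog : 0 < log (a / b) := log_pos ((one_lt_div hb).mpr hba)
  have hkey := two_mul_sub_div_add_le_log_div hb hba
  rw [div_le_iff₀ (by linarith)] at hkey
  rw [logMean, div_le_iff₀ hlog]
  linarith

theorem logMean_le_add_div_two {a b : ℝ} (ha : 0 ≤ a) (hb : 0 ≤ b) :
    logMean a b ≤ (a + b) / 2 := by
  rcases lt_trichotomy a b with hab | rfl | hba
  · rw [logMean_comm, add_comm]
    exact logMean_le_add_div_two_of_lt ha hab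
  · rw [logMean, sub_self, zero_div]
    linarith
  · exact logMean_le_add_div_two_of_lt hb hba

end Real

theorem mobility_le_half_activity_general
    (N : ℕ) (W : Matrix (Fin N) (Fin N) ℝ)
    (hW_off : ∀ m n : Fin N, m ≠ n → 0 ≤ W m n)
    (π : Fin N → ℝ) (hπ_pos : ∀ n, 0 < π n)
    (κ γ : ℝ)
    (hκ : κ = ∑ m, ∑ n, if n < m ∧ 0 < W m n then
        (W m n * π n - W n m * π m) / Real.log ((W m n * π n) / (W n m * π m)) else 0)
    (hγ : γ = ∑ m, ∑ n, if n < m then W m n * π n + W n m * π m else 0) :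
    κ ≤ γ / 2 := by
  have hflux : ∀ m n : Fin N, m ≠ n → 0 ≤ W m n * π n := fun m n hmn =>
    mul_nonneg (hW_off m n hmn) (hπ_pos n).le
  rw [hκ, hγ, Finset.sum_div]
  refine Finset.sum_le_sum fun m _ => ?_
  rw [Finset.sum_div]
  refine Finset.sum_le_sum fun n _ => ?_
  by_cases hnm : n < m
  · have hmn : m ≠ n := hnm.ne'
    have hmn_flux := hflux m n hmn
    have hnm_flux := hflux n m hmn.symm
    split_ifs
    · exact Real.logMean_le_add_div_two hmn_flux hnm_flux
    · linarith
  · simp [hnm]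

/-- **Dynamical state mobility is at most half the dynamical activity rate: `κ ≤ γ/2`.**
Here `κ = Σ_{m>n} j_{mn} / ln(w_{mn}π_n/(w_{nm}π_m))` (sum over pairs `m > n` with
`w_{mn} > 0`) and `γ = Σ_{m>n} (w_{mn}π_n + w_{nm}π_m)`. -/
theorem mobility_le_half_activity
    (N : ℕ) (W : Matrix (Fin N) (Fin N) ℝ)
    (hW_off : ∀ m n : Fin N, m ≠ n → 0 ≤ W m n)
    (hW_diag : ∀ n : Fin N, W n n = -∑ m ∈ Finset.univ.erase n, W m n)
    (hW_sign : ∀ m n : Fin N, m ≠ n → (0 < W m n ↔ 0 < W n m))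
    (π : Fin N → ℝ) (hπ_pos : ∀ n, 0 < π n) (hπ_sum : ∑ n, π n = 1)
    (hstat : W.mulVec π = 0)
    (hW_ne : ∀ m n : Fin N, n < m → 0 < W m n → W m n * π n ≠ W n m * π m)
    (κ γ : ℝ)
    (hκ : κ = ∑ m, ∑ n, if n < m ∧ 0 < W m n then
        (W m n * π n - W n m * π m) / Real.log ((W m n * π n) / (W n m * π m)) else 0)
    (hγ : γ = ∑ m, ∑ n, if n < m then W m n * π n + W n m * π m else 0) :
    κ ≤ γ / 2 :=
  mobility_le_half_activity_general N W hW_off π hπ_pos κ γ hκ hγ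
end

section
/- Let W be the transition rate matrix of a continuous-time Markov jump process in a steady state π with spectral gap g and dynamical activity rate γ. Then for every τ ≥ 0 and all observables a, b ∈ ℝ^N, D_{ba}^τ ≤ 2 e^{−gτ} ‖a‖_* ‖b‖_* √γ. -/
/-!
Expanding an observable in the left eigenvectors of `W` gives `e^{tWᵀ} x = ∑ₙ x̃ₙ e^{t λ̄ₙ} vₙ`.
Every `vₙ` with `λₙ ≠ 0` is orthogonal to `π` (pair `vₙ` with `Wπ = 0`), so the constant term
`x̃_{n₀} v_{n₀}` is exactly `πᵀx` and the centred evolution `x(t)` keeps only the modes `n ≠ n₀`.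
As `|vₙ i| ≤ 1`, each component of `x(t)` is at most `e^{-gt} ‖x‖_*`. Hence every wedge
`aₙ((1-s)τ) bₘ(sτ) - aₘ((1-s)τ) bₙ(sτ)` is at most `2 e^{-gτ} ‖a‖_* ‖b‖_*`, uniformly in `s`,
and this bound passes through the square root and the integral over `s ∈ [0, 1]`.
-/

open Matrix NormedSpace

namespace Matrix

variable {ι : Type*} [Fintype ι]

theorem conjTranspose_mulVec_eq_of_star_vecMul_eq {R : Type*} [CommSemiring R] [StarRing R]
    {M : Matrix ι ι R} {u : ι → R} {μ : R} (h : star u ᵥ* M = μ • star u) :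
    Mᴴ *ᵥ u = star μ • u := by
  simpa [star_vecMul, star_smul] using congrArg star h

theorem dotProduct_eq_zero_of_transpose_mulVec_eq_smul {R : Type*} [CommSemiring R]
    [NoZeroDivisors R] {M : Matrix ι ι R} {u p : ι → R} {μ : R} (hu : Mᵀ *ᵥ u = μ • u)
    (hμ : μ ≠ 0) (hp : M *ᵥ p = 0) : u ⬝ᵥ p = 0 := by
  have h := dotProduct_mulVec u M p
  rw [hp, dotProduct_zero, ← mulVec_transpose, hu, smul_dotProduct, smul_eq_mul] at h
  exact (mul_eq_zero.mp h.symm).resolve_left hμ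

variable [DecidableEq ι]

open scoped Matrix.Norms.Operator in
theorem exp_mulVec_of_mulVec_eq_smul {𝕂 : Type*} [RCLike 𝕂] {M : Matrix ι ι 𝕂} {x : ι → 𝕂}
    {μ : 𝕂} (h : M *ᵥ x = μ • x) : exp M *ᵥ x = exp μ • x := by
  have hpow : ∀ k : ℕ, M ^ k *ᵥ x = μ ^ k • x := fun k => by
    induction k with
    | zero => simp
    | succ k ih => rw [pow_succ', ← mulVec_mulVec, ih, mulVec_smul, h, smul_smul, ← pow_succ]
  let L : Matrix ι ι 𝕂 →+ (ι → 𝕂) := AddMonoidHom.mk' (· *ᵥ x) fun A B => add_mulVec A B x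
  refine ((exp_series_hasSum_exp' (𝕂 := 𝕂) M).map L
    (continuous_id.matrix_mulVec continuous_const)).unique ?_
  convert (exp_series_hasSum_exp' (𝕂 := 𝕂) μ).smul_const x using 1
  funext k
  simp [L, smul_mulVec, hpow, smul_smul]

open scoped Matrix.Norms.Operator in
theorem exp_map_ofReal_s8 (M : Matrix ι ι ℝ) :
    (exp M).map Complex.ofReal = exp (M.map Complex.ofReal) :=
  map_exp (Complex.ofRealHom.mapMatrix) (continuous_id.matrix_map Complex.continuous_ofReal) M

theorem exp_mulVec_sum_smul {𝕂 κ : Type*} [RCLike 𝕂] [Fintype κ] {M : Matrix ι ι 𝕂}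
    {v : κ → ι → 𝕂} {μ : κ → 𝕂} (hv : ∀ k, M *ᵥ v k = μ k • v k) (t : κ → 𝕂) :
    exp M *ᵥ ∑ k, t k • v k = ∑ k, (t k * exp (μ k)) • v k := by
  simp only [mulVec_sum, mulVec_smul, exp_mulVec_of_mulVec_eq_smul (hv _), smul_smul]

end Matrix

theorem sum_smul_dotProduct_eq_of_orthogonal {ι κ R : Type*} [Fintype ι] [Fintype κ]
    [DecidableEq κ] [CommSemiring R] {p : ι → R} {v : κ → ι → R} {k₀ : κ} {c : R}
    (hp : ∑ i, p i = 1) (hc : v k₀ = fun _ => c) (horth : ∀ k ≠ k₀, v k ⬝ᵥ p = 0)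
    (t : κ → R) : (∑ k, t k • v k) ⬝ᵥ p = t k₀ * c := by
  rw [sum_dotProduct, Finset.sum_eq_single k₀
    (fun k _ hk => by rw [smul_dotProduct, horth k hk, smul_zero]) (by simp),
    smul_dotProduct, hc]
  simp [dotProduct, ← Finset.mul_sum, hp]

theorem Complex.norm_le_one_of_sum_normSq_eq_one_s8 {ι : Type*} [Fintype ι] {u : ι → ℂ}
    (hu : ∑ i, Complex.normSq (u i) = 1) (i : ι) : ‖u i‖ ≤ 1 := by
  have h : Complex.normSq (u i) ≤ 1 :=
    hu ▸ Finset.single_le_sum (fun j _ => Complex.normSq_nonneg (u j)) (Finset.mem_univ i)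
  rw [Complex.normSq_eq_norm_sq] at h
  exact (sq_le_one_iff₀ (norm_nonneg _)).mp h

theorem norm_sum_mul_exp_mul_le {κ : Type*} {s : Finset κ} {c w μ : κ → ℂ} {g t : ℝ}
    (ht : 0 ≤ t) (hμ : ∀ k ∈ s, (μ k).re ≤ -g) (hw : ∀ k ∈ s, ‖w k‖ ≤ 1) :
    ‖∑ k ∈ s, c k * Complex.exp (t * μ k) * w k‖ ≤ Real.exp (-(g * t)) * ∑ k ∈ s, ‖c k‖ := by
  rw [Finset.mul_sum]
  refine (norm_sum_le _ _).trans (Finset.sum_le_sum fun k hk => ?_)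
  have hexp : Real.exp (t * (μ k).re) ≤ Real.exp (-(g * t)) :=
    Real.exp_le_exp.mpr (by nlinarith [hμ k hk])
  rw [norm_mul, norm_mul, Complex.norm_exp, Complex.re_ofReal_mul]
  calc ‖c k‖ * Real.exp (t * (μ k).re) * ‖w k‖ ≤ ‖c k‖ * Real.exp (t * (μ k).re) * 1 := by
        gcongr; exact hw k hk
    _ ≤ Real.exp (-(g * t)) * ‖c k‖ := by rw [mul_one, mul_comm]; gcongr

theorem sqrt_sum_wedge_sq_le {ι : Type*} [Fintype ι] [LinearOrder ι] {α β : ι → ℝ}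
    {w : ι → ι → ℝ} {A B : ℝ} (hα : ∀ i, |α i| ≤ A) (hβ : ∀ i, |β i| ≤ B) (hA : 0 ≤ A)
    (hB : 0 ≤ B) (hw : ∀ m n, n < m → 0 ≤ w m n) :
    √(∑ m, ∑ n, if n < m then (α n * β m - α m * β n) ^ 2 * w m n else 0) ≤
      2 * A * B * √(∑ m, ∑ n, if n < m then w m n else 0) := by
  have hwedge : ∀ m n, (α n * β m - α m * β n) ^ 2 ≤ (2 * A * B) ^ 2 := fun m n => by
    refine sq_le_sq' ?_ ?_ <;>
    nlinarith [abs_le.mp (hα n), abs_le.mp (hα m), abs_le.mp (hβ n), abs_le.mp (hβ m)]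
  rw [← Real.sqrt_sq (by positivity : 0 ≤ 2 * A * B), ← Real.sqrt_mul (sq_nonneg _),
    Finset.mul_sum]
  refine Real.sqrt_le_sqrt (Finset.sum_le_sum fun m _ => ?_)
  rw [Finset.mul_sum]
  refine Finset.sum_le_sum fun n _ => ?_
  split_ifs with h
  · exact mul_le_mul_of_nonneg_right (hwedge m n) (hw m n h)
  · rw [mul_zero]

section Relaxation

variable {ι κ : Type*} [Fintype ι] [DecidableEq ι] [Fintype κ]
  {W : Matrix ι ι ℝ} {v : κ → ι → ℂ} {μ : κ → ℂ}

theorem ofReal_exp_smul_transpose_mulVec (hv : ∀ k, (W.map Complex.ofReal)ᵀ *ᵥ v k = μ k • v k)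
    {x : ι → ℝ} {tx : κ → ℂ} (hx : (fun i => (x i : ℂ)) = ∑ k, tx k • v k) (t : ℝ) (i : ι) :
    ((exp (t • Wᵀ) *ᵥ x) i : ℂ) = ∑ k, tx k * Complex.exp (t * μ k) * v k i := by
  have hmap : (t • Wᵀ).map Complex.ofReal = (t : ℂ) • (W.map Complex.ofReal)ᵀ := by
    ext; simp
  have hv' : ∀ k, ((t : ℂ) • (W.map Complex.ofReal)ᵀ) *ᵥ v k = (t * μ k) • v k := fun k => by
    rw [smul_mulVec, hv, smul_smul]
  have hcast : ((exp (t • Wᵀ) *ᵥ x) i : ℂ) =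
      ((exp (t • Wᵀ)).map Complex.ofReal *ᵥ fun j => (x j : ℂ)) i :=
    RingHom.map_mulVec Complex.ofRealHom _ _ _
  rw [hcast, exp_map_ofReal_s8, hmap, hx, exp_mulVec_sum_smul hv', Finset.sum_apply]
  simp [Complex.exp_eq_exp_ℂ, mul_assoc]

variable [DecidableEq κ] {π : ι → ℝ} {k₀ : κ} {c : ℂ}

theorem ofReal_exp_smul_transpose_mulVec_sub_dotProduct
    (hπ : ∑ i, π i = 1) (hstat : W *ᵥ π = 0)
    (hv : ∀ k, (W.map Complex.ofReal)ᵀ *ᵥ v k = μ k • v k) (hμ₀ : μ k₀ = 0)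
    (hμ : ∀ k ≠ k₀, μ k ≠ 0) (hc : v k₀ = fun _ => c)
    {x : ι → ℝ} {tx : κ → ℂ} (hx : (fun i => (x i : ℂ)) = ∑ k, tx k • v k) (t : ℝ) (i : ι) :
    (((exp (t • Wᵀ) *ᵥ x) i - π ⬝ᵥ x : ℝ) : ℂ) =
      ∑ k ∈ Finset.univ.erase k₀, tx k * Complex.exp (t * μ k) * v k i := by
  have hstatℂ : W.map Complex.ofReal *ᵥ (fun i => (π i : ℂ)) = 0 := by
    ext i
    exact (RingHom.map_mulVec Complex.ofRealHom W π i).symm.trans (by simp [hstat])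
  have horth : ∀ k ≠ k₀, v k ⬝ᵥ (fun i => (π i : ℂ)) = 0 := fun k hk =>
    dotProduct_eq_zero_of_transpose_mulVec_eq_smul (hv k) (hμ k hk) hstatℂ
  have hproj : ((π ⬝ᵥ x : ℝ) : ℂ) = tx k₀ * c := by
    rw [← sum_smul_dotProduct_eq_of_orthogonal (by exact_mod_cast hπ) hc horth tx, ← hx]
    simp [dotProduct, mul_comm]
  rw [Complex.ofReal_sub, ofReal_exp_smul_transpose_mulVec hv hx, hproj,
    ← Finset.add_sum_erase _ _ (Finset.mem_univ k₀)]
  simp [hμ₀, hc]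

theorem abs_exp_smul_transpose_mulVec_sub_dotProduct_le {g t : ℝ}
    (hπ : ∑ i, π i = 1) (hstat : W *ᵥ π = 0)
    (hv : ∀ k, (W.map Complex.ofReal)ᵀ *ᵥ v k = μ k • v k) (hμ₀ : μ k₀ = 0) (hg : 0 < g)
    (hgap : ∀ k ≠ k₀, (μ k).re ≤ -g) (hc : v k₀ = fun _ => c)
    (hnorm : ∀ k, ∑ i, Complex.normSq (v k i) = 1)
    {x : ι → ℝ} {tx : κ → ℂ} (hx : (fun i => (x i : ℂ)) = ∑ k, tx k • v k) (ht : 0 ≤ t) (i : ι) :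
    |(exp (t • Wᵀ) *ᵥ x) i - π ⬝ᵥ x| ≤
      Real.exp (-(g * t)) * ∑ k ∈ Finset.univ.erase k₀, ‖tx k‖ := by
  have hμ : ∀ k ≠ k₀, μ k ≠ 0 := fun k hk h => by
    have := hgap k hk
    rw [h, Complex.zero_re] at this
    linarith
  rw [← Real.norm_eq_abs, ← Complex.norm_real,
    ofReal_exp_smul_transpose_mulVec_sub_dotProduct hπ hstat hv hμ₀ hμ hc hx]
  exact norm_sum_mul_exp_mul_le ht (fun k hk => hgap k (Finset.ne_of_mem_erase hk))
    (fun k _ => Complex.norm_le_one_of_sum_normSq_eq_one_s8 (hnorm k) i)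

end Relaxation

theorem Dba_le_exp_decay_general
    (N : ℕ) (W : Matrix (Fin N) (Fin N) ℝ)
    (hW_off : ∀ m n : Fin N, m ≠ n → 0 ≤ W m n)
    (π : Fin N → ℝ) (hπ_pos : ∀ n, 0 < π n) (hπ_sum : ∑ n, π n = 1)
    (hstat : W.mulVec π = 0)
    -- spectral decomposition of `W` by left eigenvectors
    (g : ℝ) (hg : 0 < g)
    (lam : Fin N → ℂ) (v : Fin N → Fin N → ℂ) (n₀ : Fin N)
    (hlam₀ : lam n₀ = 0)
    (hv₀ : ∃ c : ℂ, v n₀ = fun _ => c)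
    (hgap : ∀ n, n ≠ n₀ → (lam n).re ≤ -g)
    (heig : ∀ n, Matrix.vecMul (star (v n)) (W.map (Complex.ofReal)) = lam n • star (v n))
    (hnorm : ∀ n, ∑ i, Complex.normSq (v n i) = 1)
    -- dynamical activity rate
    (γ : ℝ)
    (hγ : γ = ∑ m, ∑ n, if n < m then W m n * π n + W n m * π m else 0)
    -- observables, their expansions, and their (projected) time evolutions
    (τ : ℝ) (hτ : 0 ≤ τ) (a b : Fin N → ℝ) (ta tb : Fin N → ℂ)
    (hta : (fun i => (a i : ℂ)) = ∑ n, ta n • v n)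
    (htb : (fun i => (b i : ℂ)) = ∑ n, tb n • v n)
    (af bf : ℝ → Fin N → ℝ)
    (haf : ∀ t n, af t n = (NormedSpace.exp (t • Wᵀ)).mulVec a n - ∑ m, π m * a m)
    (hbf : ∀ t n, bf t n = (NormedSpace.exp (t • Wᵀ)).mulVec b n - ∑ m, π m * b m)
    (Dba : ℝ)
    (hD : Dba = ∫ s in (0:ℝ)..1, Real.sqrt (∑ m, ∑ n, if n < m then
        (af ((1 - s) * τ) n * bf (s * τ) m - af ((1 - s) * τ) m * bf (s * τ) n) ^ 2 *
          (W m n * π n + W n m * π m) else 0)) :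
    Dba ≤ 2 * Real.exp (-(g * τ)) *
        (∑ n ∈ Finset.univ.erase n₀, ‖ta n‖) *
        (∑ n ∈ Finset.univ.erase n₀, ‖tb n‖) * Real.sqrt γ := by
  obtain ⟨c, hc⟩ := hv₀
  have hright : ∀ n, (W.map Complex.ofReal)ᵀ *ᵥ v n = star (lam n) • v n := fun n => by
    simpa [conjTranspose, transpose_map, Function.comp_def] using
      conjTranspose_mulVec_eq_of_star_vecMul_eq (heig n)
  have hdecay := fun (x : Fin N → ℝ) tx hx t (ht : 0 ≤ t) i =>
    abs_exp_smul_transpose_mulVec_sub_dotProduct_le (x := x) (tx := tx) hπ_sum hstat hright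
      (by simp [hlam₀]) hg (fun n hn => by simpa using hgap n hn) hc hnorm hx ht i
  have hw : ∀ m n : Fin N, n < m → 0 ≤ W m n * π n + W n m * π m := fun m n h =>
    add_nonneg (mul_nonneg (hW_off m n h.ne') (hπ_pos n).le)
      (mul_nonneg (hW_off n m h.ne) (hπ_pos m).le)
  set A := ∑ n ∈ Finset.univ.erase n₀, ‖ta n‖
  set B := ∑ n ∈ Finset.univ.erase n₀, ‖tb n‖
  rw [hD]
  refine (Real.le_norm_self _).trans <| (intervalIntegral.norm_integral_le_of_norm_le_const
    (C := 2 * Real.exp (-(g * τ)) * A * B * √γ) fun s hs => ?_).trans_eq (by simp)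
  rw [Set.uIoc_of_le zero_le_one] at hs
  have hα : ∀ i, |af ((1 - s) * τ) i| ≤ Real.exp (-(g * ((1 - s) * τ))) * A := fun i => by
    rw [haf]; exact hdecay a ta hta _ (mul_nonneg (by linarith [hs.2]) hτ) i
  have hβ : ∀ i, |bf (s * τ) i| ≤ Real.exp (-(g * (s * τ))) * B := fun i => by
    rw [hbf]; exact hdecay b tb htb _ (mul_nonneg hs.1.le hτ) i
  have hsplit : Real.exp (-(g * ((1 - s) * τ))) * Real.exp (-(g * (s * τ))) =
      Real.exp (-(g * τ)) := by
    rw [← Real.exp_add]; ring_nf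
  rw [Real.norm_of_nonneg (Real.sqrt_nonneg _)]
  convert sqrt_sum_wedge_sq_le hα hβ (by positivity) (by positivity) hw using 1
  rw [← hγ, ← hsplit]
  ring

/-- **Exponential decay of `D_{ba}^τ`:** `D_{ba}^τ ≤ 2 e^{−gτ} ‖a‖_* ‖b‖_* √γ`, where `g` is
the spectral gap and `γ` the dynamical activity rate. -/
theorem Dba_le_exp_decay
    (N : ℕ) (W : Matrix (Fin N) (Fin N) ℝ)
    (hW_off : ∀ m n : Fin N, m ≠ n → 0 ≤ W m n)
    (hW_diag : ∀ n : Fin N, W n n = -∑ m ∈ Finset.univ.erase n, W m n)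
    (π : Fin N → ℝ) (hπ_pos : ∀ n, 0 < π n) (hπ_sum : ∑ n, π n = 1)
    (hstat : W.mulVec π = 0)
    -- spectral decomposition of `W` by left eigenvectors
    (g : ℝ) (hg : 0 < g)
    (lam : Fin N → ℂ) (v : Fin N → Fin N → ℂ) (n₀ : Fin N)
    (hlam₀ : lam n₀ = 0)
    (hv₀ : ∃ c : ℂ, v n₀ = fun _ => c)
    (hgap : ∀ n, n ≠ n₀ → (lam n).re ≤ -g)
    (heig : ∀ n, Matrix.vecMul (star (v n)) (W.map (Complex.ofReal)) = lam n • star (v n))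
    (hnorm : ∀ n, ∑ i, Complex.normSq (v n i) = 1)
    (hbasis : LinearIndependent ℂ v)
    -- dynamical activity rate
    (γ : ℝ)
    (hγ : γ = ∑ m, ∑ n, if n < m then W m n * π n + W n m * π m else 0)
    -- observables, their expansions, and their (projected) time evolutions
    (τ : ℝ) (hτ : 0 ≤ τ) (a b : Fin N → ℝ) (ta tb : Fin N → ℂ)
    (hta : (fun i => (a i : ℂ)) = ∑ n, ta n • v n)
    (htb : (fun i => (b i : ℂ)) = ∑ n, tb n • v n)
    (af bf : ℝ → Fin N → ℝ)
    (haf : ∀ t n, af t n = (NormedSpace.exp (t • Wᵀ)).mulVec a n - ∑ m, π m * a m)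
    (hbf : ∀ t n, bf t n = (NormedSpace.exp (t • Wᵀ)).mulVec b n - ∑ m, π m * b m)
    (Dba : ℝ)
    (hD : Dba = ∫ s in (0:ℝ)..1, Real.sqrt (∑ m, ∑ n, if n < m then
        (af ((1 - s) * τ) n * bf (s * τ) m - af ((1 - s) * τ) m * bf (s * τ) n) ^ 2 *
          (W m n * π n + W n m * π m) else 0)) :
    Dba ≤ 2 * Real.exp (-(g * τ)) *
        (∑ n ∈ Finset.univ.erase n₀, ‖ta n‖) *
        (∑ n ∈ Finset.univ.erase n₀, ‖tb n‖) * Real.sqrt γ :=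
  Dba_le_exp_decay_general N W hW_off π hπ_pos hπ_sum hstat g hg lam v n₀ hlam₀ hv₀ hgap heig hnorm
    γ hγ τ hτ a b ta tb hta htb af bf haf hbf Dba hD
end

section
/- Let T ∈ ℝ^{N×N} satisfy T_{mn} > 0 for all m ≠ n, and have all row sums and all column sums equal to zero (T1 = 0 and Tᵀ1 = 0). Then for all a, b ∈ ℝ^N: (⟨b|(T − Tᵀ)|a⟩)² ≤ max_n(a_n² + b_n²) · (−⟨a|T|a⟩ − ⟨b|T|b⟩) · Σ_{m>n} (T_{mn} − T_{nm}) ln(T_{mn}/T_{nm}). -/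
open Matrix Real

/-!
Write `δ = ⟨b|(T − Tᵀ)|a⟩` as `Σ_{m>n} (T_mn − T_nm) w_mn` with `w_mn = b_m a_n − b_n a_m`, and
`−2⟨c|T|c⟩ = Σ_{m>n} (T_mn + T_nm)(c_m − c_n)²` (zero row and column sums). The Lagrange identity
gives `w_mn² ≤ (a_n² + b_n²)((a_m − a_n)² + (b_m − b_n)²)`. Cauchy–Schwarz with weights
`T_mn + T_nm` then bounds `δ²` by the decay term times `Σ (T_mn − T_nm)²/(T_mn + T_nm)`, and each
summand of the latter is at most half of `(T_mn − T_nm) log(T_mn/T_nm)`: this is the logarithmic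
mean `(p − q)/log(p/q)` being at most the arithmetic mean `(p + q)/2`.
-/

theorem two_mul_sq_le_mul_log_sub_log {y : ℝ} (hy : |y| < 1) :
    2 * y ^ 2 ≤ y * (log (1 + y) - log (1 - y)) := by
  have hsum := (hasSum_log_sub_log_of_abs_lt_one hy).mul_left y
  have hterm : ∀ k : ℕ, y * (2 * (1 / (2 * k + 1)) * y ^ (2 * k + 1)) =
      2 / (2 * k + 1) * (y ^ (k + 1)) ^ 2 := fun k => by ring
  simp only [hterm] at hsum
  -- all terms of the series are nonnegative and the first one is `2 y²`
  simpa using le_hasSum hsum 0 fun k _ => by positivity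

theorem two_mul_sq_sub_div_add_le_sub_mul_log_div {p q : ℝ} (hp : 0 < p) (hq : 0 < q) :
    2 * (p - q) ^ 2 / (p + q) ≤ (p - q) * log (p / q) := by
  have hpq : 0 < p + q := by positivity
  set y := (p - q) / (p + q) with hy_def
  have hy : |y| < 1 := by
    rw [abs_lt, lt_div_iff₀ hpq, div_lt_iff₀ hpq]
    constructor <;> linarith
  have hlog : log (1 + y) - log (1 - y) = log (p / q) := by
    have h1 : 1 + y = 2 * p / (p + q) := by rw [hy_def]; field_simp; ring
    have h2 : 1 - y = 2 * q / (p + q) := by rw [hy_def]; field_simp; ring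
    rw [← log_div (by rw [h1]; positivity) (by rw [h2]; positivity), h1, h2]
    congr 1
    field_simp
  have key := two_mul_sq_le_mul_log_sub_log hy
  rw [hlog] at key
  calc 2 * (p - q) ^ 2 / (p + q) = (p + q) * (2 * y ^ 2) := by rw [hy_def]; field_simp
    _ ≤ (p + q) * (y * log (p / q)) := by gcongr
    _ = (p - q) * log (p / q) := by rw [hy_def]; field_simp

theorem sq_mul_sub_mul_le_sq_add_sq_mul (x y x' y' : ℝ) :
    (x * y' - y * x') ^ 2 ≤ (x ^ 2 + y ^ 2) * ((x' - x) ^ 2 + (y' - y) ^ 2) := by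
  nlinarith [sq_nonneg (x * (x' - x) + y * (y' - y))]

theorem sq_sum_sub_mul_le_sum_add_mul_mul_sum_sub_mul_log {κ : Type*} (P : Finset κ)
    {p q w e : κ → ℝ} (hp : ∀ i ∈ P, 0 < p i) (hq : ∀ i ∈ P, 0 < q i)
    (hw : ∀ i ∈ P, w i ^ 2 ≤ e i) :
    (∑ i ∈ P, (p i - q i) * w i) ^ 2 ≤
      (∑ i ∈ P, (p i + q i) * e i) * (∑ i ∈ P, (p i - q i) * log (p i / q i)) / 2 := by
  have hpq : ∀ i ∈ P, 0 < p i + q i := fun i hi => add_pos (hp i hi) (hq i hi)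
  have he : ∀ i ∈ P, 0 ≤ (p i + q i) * e i := fun i hi =>
    mul_nonneg (hpq i hi).le ((sq_nonneg _).trans (hw i hi))
  have hterm : ∀ i ∈ P, ((p i - q i) * w i) ^ 2 ≤
      (p i + q i) * e i * ((p i - q i) ^ 2 / (p i + q i)) := fun i hi => by
    have hpos := hpq i hi
    calc ((p i - q i) * w i) ^ 2 = (p i - q i) ^ 2 * w i ^ 2 := mul_pow _ _ _
      _ ≤ (p i - q i) ^ 2 * e i := by gcongr; exact hw i hi
      _ = _ := by field_simp
  have hlog : ∑ i ∈ P, (p i - q i) ^ 2 / (p i + q i) ≤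
      (∑ i ∈ P, (p i - q i) * log (p i / q i)) / 2 := by
    rw [Finset.sum_div]
    refine Finset.sum_le_sum fun i hi => ?_
    rw [le_div_iff₀ two_pos, div_mul_eq_mul_div, mul_comm]
    exact two_mul_sq_sub_div_add_le_sub_mul_log_div (hp i hi) (hq i hi)
  calc (∑ i ∈ P, (p i - q i) * w i) ^ 2
      ≤ (∑ i ∈ P, (p i + q i) * e i) * ∑ i ∈ P, (p i - q i) ^ 2 / (p i + q i) :=
        Finset.sum_sq_le_sum_mul_sum_of_sq_le_mul P he
          (fun i hi => div_nonneg (sq_nonneg _) (hpq i hi).le) hterm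
    _ ≤ _ := by
        rw [mul_div_assoc]
        exact mul_le_mul_of_nonneg_left hlog (Finset.sum_nonneg he)

section PairSums

variable {ι M : Type*} [Fintype ι] [LinearOrder ι] [AddCommMonoid M]

variable (ι) in
def lowerPairs : Finset (ι × ι) := Finset.univ.filter fun p => p.2 < p.1

@[simp]
theorem mem_lowerPairs {p : ι × ι} : p ∈ lowerPairs ι ↔ p.2 < p.1 := by
  simp [lowerPairs]

theorem sum_lowerPairs (F : ι → ι → M) :
    ∑ p ∈ lowerPairs ι, F p.1 p.2 = ∑ m, ∑ n, if n < m then F m n else 0 := by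
  rw [lowerPairs, Finset.sum_filter, Fintype.sum_prod_type]

theorem sum_sum_eq_sum_lowerPairs (g : ι → ι → M) (hg : ∀ i, g i i = 0) :
    ∑ m, ∑ n, g m n = ∑ p ∈ lowerPairs ι, (g p.1 p.2 + g p.2 p.1) := by
  have hsplit : ∀ p : ι × ι, g p.1 p.2 =
      (if p.2 < p.1 then g p.1 p.2 else 0) + (if p.1 < p.2 then g p.1 p.2 else 0) := by
    rintro ⟨m, n⟩
    rcases lt_trichotomy n m with h | rfl | h
    · simp [h, h.not_gt]
    · simp [hg]
    · simp [h, h.not_gt]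
  have hswap : ∑ p : ι × ι, (if p.1 < p.2 then g p.1 p.2 else 0) =
      ∑ p : ι × ι, (if p.2 < p.1 then g p.2 p.1 else 0) :=
    (Fintype.sum_equiv (Equiv.prodComm ι ι) _ _ fun _ => rfl)
  rw [← Fintype.sum_prod_type', Fintype.sum_congr _ _ hsplit, Finset.sum_add_distrib, hswap,
    ← Finset.sum_add_distrib, lowerPairs, Finset.sum_filter]
  exact Fintype.sum_congr _ _ fun p => by split_ifs <;> simp

end PairSums

section Matrix

variable {ι R : Type*} [Fintype ι] [LinearOrder ι] [CommRing R]

theorem dotProduct_sub_transpose_mulVec (T : Matrix ι ι R) (a b : ι → R) :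
    b ⬝ᵥ (T - Tᵀ) *ᵥ a =
      ∑ p ∈ lowerPairs ι, (T p.1 p.2 - T p.2 p.1) * (b p.1 * a p.2 - b p.2 * a p.1) := by
  have hexpand : b ⬝ᵥ (T - Tᵀ) *ᵥ a = ∑ m, ∑ n, (T m n - T n m) * (b m * a n) := by
    simp only [dotProduct, mulVec, Finset.mul_sum, Matrix.sub_apply, transpose_apply]
    exact Fintype.sum_congr _ _ fun m => Fintype.sum_congr _ _ fun n => by ring
  rw [hexpand, sum_sum_eq_sum_lowerPairs _ fun i => by simp]
  exact Finset.sum_congr rfl fun p _ => by ring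

theorem neg_two_mul_dotProduct_mulVec_self (T : Matrix ι ι R)
    (hrow : ∀ i, ∑ j, T i j = 0) (hcol : ∀ j, ∑ i, T i j = 0) (c : ι → R) :
    -(2 * (c ⬝ᵥ T *ᵥ c)) =
      ∑ p ∈ lowerPairs ι, (T p.1 p.2 + T p.2 p.1) * (c p.1 - c p.2) ^ 2 := by
  have hrow' : ∑ m, ∑ n, T m n * c m ^ 2 = 0 := by
    simp [← Finset.sum_mul, hrow]
  have hcol' : ∑ m, ∑ n, T m n * c n ^ 2 = 0 := by
    rw [Finset.sum_comm]
    simp [← Finset.sum_mul, hcol]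
  have hexpand : -(2 * (c ⬝ᵥ T *ᵥ c)) = ∑ m, ∑ n, T m n * (c m - c n) ^ 2 := by
    have h : ∑ m, ∑ n, T m n * (c m - c n) ^ 2 = ∑ m, ∑ n, T m n * c m ^ 2 +
        ∑ m, ∑ n, T m n * c n ^ 2 - 2 * ∑ m, ∑ n, c m * (T m n * c n) := by
      simp only [Finset.mul_sum, ← Finset.sum_add_distrib, ← Finset.sum_sub_distrib]
      exact Fintype.sum_congr _ _ fun m => Fintype.sum_congr _ _ fun n => by ring
    rw [h, hrow', hcol']
    simp [dotProduct, mulVec, Finset.mul_sum]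
  rw [hexpand, sum_sum_eq_sum_lowerPairs _ fun i => by simp]
  exact Finset.sum_congr rfl fun p _ => by ring

end Matrix

/-- For `T ∈ ℝ^{N×N}` with strictly positive off-diagonal entries and zero row and column
sums, and all `a, b ∈ ℝ^N`:
`(⟨b|(T − Tᵀ)|a⟩)² ≤ max_n(a_n² + b_n²) · (−⟨a|T|a⟩ − ⟨b|T|b⟩) · Σ_{m>n} (T_{mn} − T_{nm}) ln(T_{mn}/T_{nm})`. -/
theorem asymmetry_sq_le_max_mul_decay_mul_KL
    (N : ℕ) (hN : 0 < N) (T : Matrix (Fin N) (Fin N) ℝ)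
    (hT_pos : ∀ m n : Fin N, m ≠ n → 0 < T m n)
    (hT_row : ∀ n : Fin N, ∑ m, T n m = 0)
    (hT_col : ∀ n : Fin N, ∑ m, T m n = 0)
    (a b : Fin N → ℝ) :
    (b ⬝ᵥ (T - Tᵀ).mulVec a) ^ 2 ≤
      (Finset.univ.sup' ⟨⟨0, hN⟩, Finset.mem_univ _⟩ fun n => a n ^ 2 + b n ^ 2) *
        (-(a ⬝ᵥ T.mulVec a) - b ⬝ᵥ T.mulVec b) *
        ∑ m, ∑ n, if n < m then (T m n - T n m) * Real.log (T m n / T n m) else 0 := by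
  set M := Finset.univ.sup' ⟨⟨0, hN⟩, Finset.mem_univ _⟩ fun n => a n ^ 2 + b n ^ 2
  have hM : ∀ n, a n ^ 2 + b n ^ 2 ≤ M := fun n =>
    Finset.le_sup' (fun n => a n ^ 2 + b n ^ 2) (Finset.mem_univ n)
  have hcross : ∀ p ∈ lowerPairs (Fin N), (b p.1 * a p.2 - b p.2 * a p.1) ^ 2 ≤
      M * ((a p.1 - a p.2) ^ 2 + (b p.1 - b p.2) ^ 2) := fun ⟨m, n⟩ _ =>
    calc (b m * a n - b n * a m) ^ 2 = (a n * b m - b n * a m) ^ 2 := by ring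
      _ ≤ (a n ^ 2 + b n ^ 2) * ((a m - a n) ^ 2 + (b m - b n) ^ 2) :=
        sq_mul_sub_mul_le_sq_add_sq_mul _ _ _ _
      _ ≤ _ := by gcongr; exact hM n
  have key := sq_sum_sub_mul_le_sum_add_mul_mul_sum_sub_mul_log (lowerPairs (Fin N))
    (fun p hp => hT_pos _ _ (mem_lowerPairs.mp hp).ne')
    (fun p hp => hT_pos _ _ (mem_lowerPairs.mp hp).ne) hcross
  have hdecay : ∑ p ∈ lowerPairs (Fin N), (T p.1 p.2 + T p.2 p.1) *
      (M * ((a p.1 - a p.2) ^ 2 + (b p.1 - b p.2) ^ 2)) =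
        M * (2 * (-(a ⬝ᵥ T *ᵥ a) - b ⬝ᵥ T *ᵥ b)) := by
    simp only [mul_left_comm _ M, ← Finset.mul_sum, mul_add, Finset.sum_add_distrib,
      ← neg_two_mul_dotProduct_mulVec_self T hT_row hT_col]
    ring
  rw [← dotProduct_sub_transpose_mulVec, hdecay,
    sum_lowerPairs fun m n => (T m n - T n m) * log (T m n / T n m)] at key
  linarith
end

section
/- Let n ≥ 1 and let p₁,…,p_n, q₁,…,q_n be positive reals with p_i > q_i for all i, and ℓ₁,…,ℓ_n ≥ 0 with Σ_i ℓ_i > 0. Then Σ_{i=1}^{n} ((p_i + q_i)/(p_i − q_i)) ℓ_i² ≥ (Σ_{i=1}^{n} ℓ_i)² / ( n · tanh( (1/(2n)) Σ_{i=1}^{n} ln(p_i/q_i) ) ). -/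
/-!
Writing `x_i = (p_i - q_i)/(p_i + q_i)`, one has `x_i = tanh (log (p_i / q_i) / 2)`, i.e.
`log (p_i / q_i) / 2 = artanh x_i`. Since `tanh` is concave on `[0, ∞)`, Jensen's inequality gives
`Σ x_i ≤ n tanh ((1/(2n)) Σ log (p_i / q_i))`, and Sedrakyan's form of Cauchy–Schwarz gives
`(Σ ℓ_i)² / Σ x_i ≤ Σ ℓ_i² / x_i`, which is the right-hand side.
-/

open Finset Real

namespace Real

theorem hasDerivAt_tanh (x : ℝ) : HasDerivAt tanh (1 / cosh x ^ 2) x := by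
  have h := (hasDerivAt_sinh x).div (hasDerivAt_cosh x) (cosh_pos x).ne'
  rw [show sinh / cosh = tanh from funext fun y => (tanh_eq_sinh_div_cosh y).symm] at h
  refine h.congr_deriv ?_
  rw [← cosh_sq_sub_sinh_sq x]
  ring

theorem deriv_tanh : deriv tanh = fun x => 1 / cosh x ^ 2 :=
  funext fun x => (hasDerivAt_tanh x).deriv

theorem concaveOn_tanh_Ici : ConcaveOn ℝ (Set.Ici 0) tanh := by
  refine AntitoneOn.concaveOn_of_deriv (convex_Ici 0)
    (fun x _ => (hasDerivAt_tanh x).continuousAt.continuousWithinAt)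
    (fun x _ => (hasDerivAt_tanh x).differentiableAt.differentiableWithinAt) ?_
  intro x hx y hy hxy
  rw [interior_Ici, Set.mem_Ioi] at hx hy
  simp only [deriv_tanh]
  have hcosh : cosh x ≤ cosh y := cosh_le_cosh.2 (by rwa [abs_of_pos hx, abs_of_pos hy])
  gcongr

theorem tanh_half_log_div {p q : ℝ} (hp : 0 < p) (hq : 0 < q) :
    tanh (log (p / q) / 2) = (p - q) / (p + q) := by
  have hmem : (p - q) / (p + q) ∈ Set.Ioo (-1) 1 := by
    rw [Set.mem_Ioo, lt_div_iff₀ (by linarith), div_lt_iff₀ (by linarith)]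
    constructor <;> linarith
  have hratio : (1 + (p - q) / (p + q)) / (1 - (p - q) / (p + q)) = p / q := by
    have hpq : p + q ≠ 0 := by linarith
    rw [one_add_div hpq, one_sub_div hpq, div_div_div_cancel_right₀ hpq]
    ring
  rw [← tanh_artanh hmem, artanh_eq_half_log (Set.Ioo_subset_Icc_self hmem), hratio]
  ring_nf

end Real

theorem ConcaveOn.sum_le_card_mul_map_average {ι E : Type*} [AddCommGroup E] [Module ℝ E]
    {s : Set E} {f : E → ℝ} (hf : ConcaveOn ℝ s f) {t : Finset ι} (ht : t.Nonempty)
    {p : ι → E} (hp : ∀ i ∈ t, p i ∈ s) :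
    ∑ i ∈ t, f (p i) ≤ #t * f ((#t : ℝ)⁻¹ • ∑ i ∈ t, p i) := by
  have hcard : (0 : ℝ) < #t := by exact_mod_cast ht.card_pos
  have hjensen := hf.le_map_sum (w := fun _ => (#t : ℝ)⁻¹) (fun _ _ => by positivity)
    (by simp [hcard.ne']) hp
  rw [← smul_sum, ← smul_sum, smul_eq_mul] at hjensen
  rwa [← inv_mul_le_iff₀ hcard]

theorem sum_ratio_mul_sq_ge_sq_div_tanh_general
    (n : ℕ) (p q ℓ : Fin n → ℝ)
    (hq : ∀ i, 0 < q i) (hpq : ∀ i, q i < p i) :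
    (∑ i, ℓ i) ^ 2 / ((n : ℝ) * Real.tanh ((1 / (2 * (n : ℝ))) * ∑ i, Real.log (p i / q i))) ≤
      ∑ i, ((p i + q i) / (p i - q i)) * ℓ i ^ 2 := by
  rcases isEmpty_or_nonempty (Fin n) with _ | _
  · simp
  have hp i : 0 < p i := (hq i).trans (hpq i)
  set x : Fin n → ℝ := fun i => (p i - q i) / (p i + q i)
  have hx_pos i : 0 < x i := div_pos (by linarith [hpq i]) (by linarith [hp i, hq i])
  have hx_tanh i : x i = tanh (log (p i / q i) / 2) := (tanh_half_log_div (hp i) (hq i)).symm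
  have hsum_x : ∑ i, x i ≤ n * tanh ((1 / (2 * (n : ℝ))) * ∑ i, log (p i / q i)) := by
    have hjensen := concaveOn_tanh_Ici.sum_le_card_mul_map_average univ_nonempty
      (p := fun i => log (p i / q i) / 2)
      (fun i _ => div_nonneg (log_nonneg ((one_le_div (hq i)).2 (hpq i).le)) zero_le_two)
    simp only [card_univ, Fintype.card_fin, smul_eq_mul, ← sum_div] at hjensen
    simp only [hx_tanh]
    convert hjensen using 3
    ring
  calc (∑ i, ℓ i) ^ 2 / ((n : ℝ) * tanh ((1 / (2 * (n : ℝ))) * ∑ i, log (p i / q i)))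
      ≤ (∑ i, ℓ i) ^ 2 / ∑ i, x i :=
        div_le_div_of_nonneg_left (sq_nonneg _) (sum_pos (fun i _ => hx_pos i) univ_nonempty)
          hsum_x
    _ ≤ ∑ i, ℓ i ^ 2 / x i := sq_sum_div_le_sum_sq_div _ ℓ fun i _ => hx_pos i
    _ = ∑ i, ((p i + q i) / (p i - q i)) * ℓ i ^ 2 := by
        refine sum_congr rfl fun i _ => ?_
        rw [div_div_eq_mul_div]
        ring

/-- Cauchy–Schwarz plus Jensen for `arctanh`: for positive reals `p_i > q_i` and
nonnegative lengths `ℓ_i` with positive total length,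
`Σ_i ((p_i + q_i)/(p_i − q_i)) ℓ_i² ≥ (Σ_i ℓ_i)² / (n · tanh((1/(2n)) Σ_i ln(p_i/q_i)))`. -/
theorem sum_ratio_mul_sq_ge_sq_div_tanh
    (n : ℕ) (hn : 1 ≤ n) (p q ℓ : Fin n → ℝ)
    (hq : ∀ i, 0 < q i) (hpq : ∀ i, q i < p i)
    (hℓ : ∀ i, 0 ≤ ℓ i) (hℓsum : 0 < ∑ i, ℓ i) :
    (∑ i, ℓ i) ^ 2 / ((n : ℝ) * Real.tanh ((1 / (2 * (n : ℝ))) * ∑ i, Real.log (p i / q i))) ≤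
      ∑ i, ((p i + q i) / (p i - q i)) * ℓ i ^ 2 :=
  sum_ratio_mul_sq_ge_sq_div_tanh_general n p q ℓ hq hpq
end
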